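/- Let β > 0, k ∈ ℕ, 0 < r < R, and let Y ⊂ ℝ be a finite set with r < |y| ≤ R for every y ∈ Y. Then the function Ψ(x) := −β · Σ_{1 ≤ i < j ≤ k} log(x_j − x_i) − β · Σ_{i=1}^k Σ_{y ∈ Y} log |1 − x_i / y| is convex on the chamber C_r^k := {x ∈ ℝ^k : −r ≤ x_1 < x_2 < ⋯ < x_k ≤ r}. -/

import Mathlib

/-!
Each summand of `Ψ` is `-log` of a function that is affine in `x` and positive on the chamber:
`x j - x i > 0` by the ordering, and `1 - x i / y > 0` because `|x i| ≤ r < |y|`. Since `-log` is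
convex on `(0, ∞)`, each summand is convex on the (convex) chamber, and so is their nonnegative
combination `Ψ`.
-/

open Real Set

theorem ConvexOn.sum {𝕜 E β ι : Type*} [Semiring 𝕜] [PartialOrder 𝕜] [AddCommMonoid E]
    [AddCommMonoid β] [PartialOrder β] [IsOrderedAddMonoid β] [SMul 𝕜 E] [Module 𝕜 β]
    {s : Set E} (hs : Convex 𝕜 s) {t : Finset ι} {f : ι → E → β}
    (hf : ∀ i ∈ t, ConvexOn 𝕜 s (f i)) :
    ConvexOn 𝕜 s (fun x => ∑ i ∈ t, f i x) := by
  simpa only [Finset.sum_fn] using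
    Finset.sum_induction f (ConvexOn 𝕜 s) (fun _ _ => ConvexOn.add) (convexOn_const (0 : β) hs) hf

theorem convexOn_neg_log_comp_affineMap {E : Type*} [AddCommGroup E] [Module ℝ E]
    {s : Set E} (hs : Convex ℝ s) (g : E →ᵃ[ℝ] ℝ) (hg : ∀ x ∈ s, 0 < g x) :
    ConvexOn ℝ s (fun x => -log (g x)) :=
  (strictConcaveOn_log_Ioi.concaveOn.neg.comp_affineMap g).subset hg hs

theorem convex_setOf_strictMono (ι : Type*) [Preorder ι] :
    Convex ℝ {x : ι → ℝ | StrictMono x} := by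
  refine convex_iff_forall_pos.2 fun x hx y hy a b ha hb _ => ?_
  exact (hx.const_mul ha).add (hy.const_mul hb)

def weylChamber (ι : Type*) [Preorder ι] (a b : ℝ) : Set (ι → ℝ) :=
  {x | StrictMono x ∧ ∀ i, x i ∈ Icc a b}

theorem convex_weylChamber (ι : Type*) [Preorder ι] (a b : ℝ) :
    Convex ℝ (weylChamber ι a b) := fun _ hx _ hy _ _ ha hb hab =>
  ⟨convex_setOf_strictMono ι hx.1 hy.1 ha hb hab,
    fun i => convex_Icc a b (hx.2 i) (hy.2 i) ha hb hab⟩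

theorem one_sub_div_pos_of_abs_lt {t y : ℝ} (h : |t| < |y|) : 0 < 1 - t / y := by
  have hy : 0 < |y| := (abs_nonneg t).trans_lt h
  have : |t / y| < 1 := by rwa [abs_div, div_lt_one hy]
  linarith [le_abs_self (t / y)]

section WeylChamber

variable {ι : Type*} [Preorder ι] {r : ℝ}

theorem convexOn_neg_log_sub_weylChamber {i j : ι} (hij : i < j) :
    ConvexOn ℝ (weylChamber ι (-r) r) (fun x => -log (x j - x i)) := by
  refine (convexOn_neg_log_comp_affineMap (convex_weylChamber ι _ _)
    (LinearMap.proj (R := ℝ) (φ := fun _ : ι => ℝ) j - LinearMap.proj i).toAffineMap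
    fun x hx => ?_).congr fun x _ => ?_
  · simpa using hx.1 hij
  · simp

theorem convexOn_neg_log_abs_one_sub_div_weylChamber (i : ι) {y : ℝ} (hy : r < |y|) :
    ConvexOn ℝ (weylChamber ι (-r) r) (fun x => -log |1 - x i / y|) := by
  refine (convexOn_neg_log_comp_affineMap (convex_weylChamber ι _ _)
    (AffineMap.const ℝ _ 1 - (y⁻¹ • LinearMap.proj i).toAffineMap)
    fun x hx => ?_).congr fun x _ => ?_
  · simpa [div_eq_inv_mul] using one_sub_div_pos_of_abs_lt ((abs_le.2 (hx.2 i)).trans_lt hy)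
  · simp [div_eq_inv_mul]

end WeylChamber

theorem sineBeta_hamiltonian_convexOn_general (β : ℝ) (hβ : 0 < β) (k : ℕ)
    (r R : ℝ)
    (Y : Finset ℝ) (hY : ∀ y ∈ Y, r < |y| ∧ |y| ≤ R) :
    ConvexOn ℝ
      {x : Fin k → ℝ | StrictMono x ∧ ∀ i, x i ∈ Set.Icc (-r) r}
      (fun x : Fin k → ℝ =>
        -β * ∑ p ∈ Finset.univ.filter (fun p : Fin k × Fin k => p.1 < p.2),
            Real.log (x p.2 - x p.1)
          - β * ∑ i : Fin k, ∑ y ∈ Y, Real.log |1 - x i / y|) := by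
  have hC := convex_weylChamber (Fin k) (-r) r
  have hpairs : ConvexOn ℝ (weylChamber (Fin k) (-r) r) fun x =>
      ∑ p ∈ Finset.univ.filter (fun p : Fin k × Fin k => p.1 < p.2), -log (x p.2 - x p.1) :=
    ConvexOn.sum hC fun p hp => convexOn_neg_log_sub_weylChamber (Finset.mem_filter.1 hp).2
  have hexterior : ConvexOn ℝ (weylChamber (Fin k) (-r) r) fun x =>
      ∑ i, ∑ y ∈ Y, -log |1 - x i / y| :=
    ConvexOn.sum hC fun i _ => ConvexOn.sum hC fun y hy =>
      convexOn_neg_log_abs_one_sub_div_weylChamber i (hY y hy).1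
  refine ((hpairs.smul hβ.le).add (hexterior.smul hβ.le)).congr fun x _ => ?_
  simp only [Pi.add_apply, smul_eq_mul, Finset.sum_neg_distrib]
  ring

/-- Chamber formulation of the geodesic convexity of the truncated conditional
Hamiltonian of the sine_β ensemble: for `β > 0`, `0 < r < R` and a finite exterior
configuration `Y ⊆ {y : r < |y| ≤ R}`, the Hamiltonian
`Ψ x = -β ∑_{i<j} log (x j - x i) - β ∑_i ∑_{y ∈ Y} log |1 - x i / y|`
is convex on the Weyl chamber `{x : -r ≤ x 1 < x 2 < ⋯ < x k ≤ r}`. -/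
theorem sineBeta_hamiltonian_convexOn (β : ℝ) (hβ : 0 < β) (k : ℕ)
    (r R : ℝ) (hr : 0 < r) (hrR : r < R)
    (Y : Finset ℝ) (hY : ∀ y ∈ Y, r < |y| ∧ |y| ≤ R) :
    ConvexOn ℝ
      {x : Fin k → ℝ | StrictMono x ∧ ∀ i, x i ∈ Set.Icc (-r) r}
      (fun x : Fin k → ℝ =>
        -β * ∑ p ∈ Finset.univ.filter (fun p : Fin k × Fin k => p.1 < p.2),
            Real.log (x p.2 - x p.1)
          - β * ∑ i : Fin k, ∑ y ∈ Y, Real.log |1 - x i / y|) :=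
  sineBeta_hamiltonian_convexOn_general β hβ k r R Y hY
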